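/- Let Q be a divisible commutative quantale, b ∈ Q, and let (x_i)_{i ∈ I} be a family of elements with x_i ≤ b for all i, and y ≤ b. Then the smooth slice multiplication distributes over suprema: (⨆_i x_i) ⊗_b y = ⨆_i (x_i ⊗_b y), where x ⊗_b y := b ⊗ (b ⧵ x) ⊗ (b ⧵ y). -/

import Mathlib

/-- Residuation in a quantale: `a ⧵ b = sSup {c | a * c ≤ b}`. -/
def res {Q : Type*} [Mul Q] [CompleteLattice Q] (a b : Q) : Q := sSup {c | a * c ≤ b}

/-- The smooth slice multiplication on `[⊥, b]`: `x ⊗_b y = b * (b ⧵ x) * (b ⧵ y)`. -/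
def smul {Q : Type*} [Mul Q] [CompleteLattice Q] (b x y : Q) : Q := b * res b x * res b y

/-!
Whenever `b ∣ x`, cancellation by residuation is exact: `b ⊗ (b ⧵ x) = x`. Divisibility makes
this hold for every `x ≤ b`, so on `[⊥, b]` the slice product collapses to `x ⊗_b y = x ⊗ (b ⧵ y)`,
which is right multiplication by a fixed element and hence preserves suprema.
-/

open Quantale

section Residuation

variable {Q : Type*} [Semigroup Q] [CompleteLattice Q] [IsQuantale Q]

-- `res a b` is Mathlib's right residuation `a ⇨ᵣ b` by definition.
theorem mul_res_le (a b : Q) : a * res a b ≤ b :=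
  rightMulResiduation_le_iff_mul_le.mp le_rfl

theorem mul_res_eq_of_dvd {a b : Q} (h : b ∣ a) : b * res b a = a := by
  obtain ⟨c, rfl⟩ := h
  have hc : c ≤ res b (b * c) := le_sSup le_rfl
  exact le_antisymm (mul_res_le _ _) (mul_le_mul_right hc b)

theorem smul_eq_mul_res_of_dvd {b x : Q} (h : b ∣ x) (y : Q) : smul b x y = x * res b y := by
  rw [smul, mul_res_eq_of_dvd h]

end Residuation

theorem smooth_slice_distrib_general {Q : Type*} [CommSemigroup Q] [CompleteLattice Q] [IsQuantale Q]
    (hdiv : ∀ a b : Q, a ≤ b → ∃ c, a = b * c)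
    {b y : Q} {I : Type*} (x : I → Q) (hx : ∀ i, x i ≤ b) :
    smul b (⨆ i, x i) y = ⨆ i, smul b (x i) y := by
  have hdvd : ∀ a, a ≤ b → b ∣ a := fun a ha => hdiv a b ha
  rw [smul_eq_mul_res_of_dvd (hdvd _ (iSup_le hx)), iSup_mul_distrib]
  simp only [smul_eq_mul_res_of_dvd (hdvd _ (hx _))]

/-- In a divisible commutative quantale, the smooth slice multiplication `⊗_b`
distributes over suprema of families in `[⊥, b]`. -/
theorem smooth_slice_distrib {Q : Type*} [CommSemigroup Q] [CompleteLattice Q] [IsQuantale Q]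
    (hdiv : ∀ a b : Q, a ≤ b → ∃ c, a = b * c)
    {b y : Q} {I : Type*} (x : I → Q) (hx : ∀ i, x i ≤ b) (hy : y ≤ b) :
    smul b (⨆ i, x i) y = ⨆ i, smul b (x i) y :=
  smooth_slice_distrib_general hdiv x hx
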